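/- Let r ≥ 2 and μ ∈ P̄_k. For 1 ≤ m ≤ r−1 the m-fold Hecke transformation is given explicitly by H^m(μ)_j = k − μ_{r−m} + μ_{r−m+j} for 1 ≤ j ≤ m, and H^m(μ)_j = μ_{j−m} − μ_{r−m} for m < j ≤ r; moreover H^r(μ) = (μ_1−μ_r, μ_2−μ_r, …, μ_{r−1}−μ_r, 0). -/

import Mathlib

open scoped BigOperators
open Complex

noncomputable section

namespace VerlindePaper

/-- The Schur value `S_λ(z₁,…,z_r) = det(z_j^{λ_i+r-i}) / det(z_j^{r-i})`
(indices `i` are 0-based, so the exponent is `λ i + (r - 1 - i)`). -/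
noncomputable def schur {r : ℕ} (lam : Fin r → ℤ) (z : Fin r → ℂ) : ℂ :=
  Matrix.det (Matrix.of fun i j : Fin r => z j ^ (lam i + ((r : ℤ) - 1 - (i : ℕ)))) /
    Matrix.det (Matrix.of fun i j : Fin r => z j ^ ((r : ℤ) - 1 - (i : ℕ)))

/-- `ζ_v = (e^{2πi v_1/(r+k)}, …, e^{2πi v_r/(r+k)})`. -/
noncomputable def zeta (r k : ℕ) (v : Fin r → ℤ) : Fin r → ℂ :=
  fun j => Complex.exp (2 * (Real.pi : ℂ) * Complex.I * (v j : ℂ) / ((r : ℂ) + (k : ℂ)))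

/-- `D(v) = ∏_{i<j} (2 sin(π(v_i - v_j)/(r+k)))²`. -/
noncomputable def Dv (r k : ℕ) (v : Fin r → ℤ) : ℝ :=
  ∏ p ∈ Finset.univ.filter (fun p : Fin r × Fin r => p.1 < p.2),
    (2 * Real.sin (Real.pi * ((v p.1 : ℝ) - (v p.2 : ℝ)) / ((r : ℝ) + (k : ℝ)))) ^ 2

/-- `P̄_k = {μ : 0 ≤ μ_r ≤ ⋯ ≤ μ_1 ≤ k}` (0-based: `μ 0 = μ_1`). -/
def Pbar (r k : ℕ) : Finset (Fin r → ℤ) :=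
  (Finset.Icc 0 (fun _ => (k : ℤ))).filter (fun μ => ∀ i j : Fin r, i ≤ j → μ j ≤ μ i)

/-- `P_k = {μ : 0 ≤ μ_r ≤ ⋯ ≤ μ_1 ≤ k-1}`. -/
def Pk (r k : ℕ) : Finset (Fin r → ℤ) :=
  (Finset.Icc 0 (fun _ => (k : ℤ) - 1)).filter (fun μ => ∀ i j : Fin r, i ≤ j → μ j ≤ μ i)

/-- `W_k = {μ ∈ P̄_k : μ_r = 0}`. -/
def Wk (r k : ℕ) : Finset (Fin r → ℤ) :=
  (Pbar r k).filter (fun μ => ∀ i : Fin r, (i : ℕ) = r - 1 → μ i = 0)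

/-- `μ* = (k - μ_r, k - μ_{r-1}, …, k - μ_1)`. -/
def mustar (k : ℕ) {r : ℕ} (μ : Fin r → ℤ) : Fin r → ℤ :=
  fun i => (k : ℤ) - μ i.rev

/-- `μ ∼ ν` iff `μ - ν` is a constant vector. -/
def sim {r : ℕ} (μ ν : Fin r → ℤ) : Prop := ∃ a : ℤ, ∀ i, μ i = ν i + a

/-- The index set of the Verlinde sums: integer vectors with
`0 = v_r < v_{r-1} < ⋯ < v_1 < r + k`. -/
def Vset (r k : ℕ) : Finset (Fin r → ℤ) :=
  (Finset.Icc 0 (fun _ => (r : ℤ) + (k : ℤ) - 1)).filter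
    (fun v => (∀ i j : Fin r, i < j → v j < v i) ∧ ∀ i : Fin r, (i : ℕ) = r - 1 → v i = 0)

/-- The Verlinde number `V_g(r,d,(λ_x)_{x∈I})`. -/
noncomputable def verlinde (r k : ℕ) (g : ℕ) (d : ℤ) {I : Type*} [Fintype I]
    (lam : I → Fin r → ℤ) : ℂ :=
  (-1 : ℂ) ^ (d * ((r : ℤ) - 1)) * ((k : ℂ) / (r : ℂ)) ^ g *
    ((r : ℂ) * ((r : ℂ) + (k : ℂ)) ^ (r - 1)) ^ ((g : ℤ) - 1) *
    ∑ v ∈ Vset r k,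
      Complex.exp (2 * (Real.pi : ℂ) * Complex.I *
          ((d : ℂ) / (r : ℂ) -
            (∑ x, ∑ i, (lam x i : ℂ)) / ((r : ℂ) * ((r : ℂ) + (k : ℂ)))) *
          (∑ i, (v i : ℂ))) *
        (∏ x, schur (lam x) (zeta r k v)) * ((Dv r k v : ℂ)) ^ (1 - (g : ℤ))

/-- The Hecke transformation
`H¹(μ) = (k - μ_{r-1} + μ_r, μ_1 - μ_{r-1}, …, μ_{r-2} - μ_{r-1}, 0)`. -/
def H1 (k : ℕ) {r : ℕ} (μ : Fin r → ℤ) : Fin r → ℤ := fun j =>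
  have hj : (j : ℕ) < r := j.isLt
  if (j : ℕ) = 0 then (k : ℤ) - μ ⟨r - 2, by omega⟩ + μ ⟨r - 1, by omega⟩
  else μ ⟨(j : ℕ) - 1, by omega⟩ - μ ⟨r - 2, by omega⟩

/-- The iterated Hecke transformation `H^m = H¹ ∘ ⋯ ∘ H¹`. -/
def Hm (k : ℕ) {r : ℕ} (m : ℕ) (μ : Fin r → ℤ) : Fin r → ℤ := (H1 k)^[m] μ

/-- `μ ∈ Y(λ, ω_s)`: `μ` is a partition obtained from `λ` by adding `s` boxes,
no two in the same row. -/
def inY {r : ℕ} (lam : Fin r → ℤ) (s : ℕ) (μ : Fin r → ℤ) : Prop :=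
  (∀ i j : Fin r, i ≤ j → μ j ≤ μ i) ∧ (∀ i, μ i - lam i = 0 ∨ μ i - lam i = 1) ∧
    (∑ i, μ i) = (∑ i, lam i) + (s : ℤ)

/-- The Vandermonde product `Δ(z) = ∏_{i<j} (z_i - z_j)`. -/
noncomputable def vand {r : ℕ} (z : Fin r → ℂ) : ℂ :=
  ∏ p ∈ Finset.univ.filter (fun p : Fin r × Fin r => p.1 < p.2), (z p.1 - z p.2)

/-- `J_v(t) = Σ_{τ ∈ S_r} sgn(τ) exp(2πi (Σ_j v_{τ(j)} t_j)/(r+k))`. -/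
noncomputable def Jv (r k : ℕ) (v : Fin r → ℤ) (t : Fin r → Fin (r + k)) : ℂ :=
  ∑ τ : Equiv.Perm (Fin r), ((Equiv.Perm.sign τ : ℤ) : ℂ) *
    Complex.exp (2 * (Real.pi : ℂ) * Complex.I *
      (∑ j, (v (τ j) : ℂ) * ((t j : ℕ) : ℂ)) / ((r : ℂ) + (k : ℂ)))


/-!
Extend `μ` to a function `f : ℤ → ℤ` that agrees with `μ` on `0, …, r - 1` and satisfies
`f (i - r) = f i + k`. In terms of such an extension, `H¹` is the shift `f ↦ f (· - 1)` followed by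
subtracting the constant that makes the last entry vanish, so
`H^m(μ)_j = f (j - m) - f (r - 1 - m)` for every `m ≥ 1`; the stated formulas are this identity
with `f` evaluated on `[-r, r)`.
-/

def IsTwistedExtension (k : ℕ) {r : ℕ} (μ : Fin r → ℤ) (f : ℤ → ℤ) : Prop :=
  (∀ j : Fin r, f j = μ j) ∧ ∀ i, f (i - r) = f i + k

namespace IsTwistedExtension

variable {k r : ℕ} {μ : Fin r → ℤ} {f : ℤ → ℤ}

theorem exists_of_pos (hr : 0 < r) (μ : Fin r → ℤ) : ∃ f, IsTwistedExtension k μ f := by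
  have hr' : (0 : ℤ) < r := by omega
  refine ⟨fun i => μ ⟨(i % r).toNat, by have := Int.emod_lt_of_pos i hr'; omega⟩ - k * (i / r),
    fun j => ?_, fun i => ?_⟩
  · have hj : (j : ℤ) < r := by omega
    simp [Int.emod_eq_of_lt (Int.natCast_nonneg j) hj,
      Int.ediv_eq_zero_of_lt (Int.natCast_nonneg j) hj]
  · have hdiv : (i - r) / r = i / r - 1 := by
      rw [sub_eq_add_neg, ← mul_neg_one, Int.add_mul_ediv_left _ _ hr'.ne']
      ring
    simp only [Int.sub_emod_right, hdiv]
    ring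

theorem apply_of_eq (hf : IsTwistedExtension k μ f) {i : ℤ} {j : Fin r} (h : i = j) :
    f i = μ j :=
  h ▸ hf.1 j

theorem apply_of_add_eq (hf : IsTwistedExtension k μ f) {i : ℤ} {j : Fin r} (h : i + r = j) :
    f i = μ j + k := by
  rw [← hf.apply_of_eq h, ← hf.2, add_sub_cancel_right]

end IsTwistedExtension

theorem H1_apply_of_eq_sub {k r : ℕ} (hr : 2 ≤ r) {ν : Fin r → ℤ} {f : ℤ → ℤ} (c : ℤ)
    (hf : ∀ i, f (i - r) = f i + k) (hν : ∀ j : Fin r, ν j = f j - c) (j : Fin r) :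
    H1 k ν j = f (j - 1) - f (r - 2) := by
  have hcast : ((r - 2 : ℕ) : ℤ) = r - 2 := by omega
  unfold H1
  split_ifs with hj
  · have hlast : f (j - 1) = f (r - 1) + k := by
      rw [← hf]
      congr 1
      omega
    simp only [hν, hcast, hlast]
    push_cast [Nat.cast_sub (by omega : 1 ≤ r)]
    ring
  · simp only [hν, hcast]
    push_cast [Nat.cast_sub (by omega : 1 ≤ (j : ℕ))]
    ring

theorem Hm_succ_apply (k : ℕ) {r : ℕ} (m : ℕ) (μ : Fin r → ℤ) :
    Hm k (m + 1) μ = H1 k (Hm k m μ) :=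
  Function.iterate_succ_apply' _ _ _

theorem Hm_apply_eq_sub {k r : ℕ} (hr : 2 ≤ r) {μ : Fin r → ℤ} {f : ℤ → ℤ}
    (hf : IsTwistedExtension k μ f) {m : ℕ} (hm : 1 ≤ m) (j : Fin r) :
    Hm k m μ j = f (j - m) - f (r - 1 - m) := by
  induction m, hm using Nat.le_induction generalizing j with
  | base =>
    rw [Hm_succ_apply, H1_apply_of_eq_sub hr 0 hf.2 fun j => by rw [sub_zero, hf.1]; rfl]
    push_cast
    ring_nf
  | succ m _ ih =>
    have hshift : ∀ i, f (i - r - m) = f (i - m) + k := fun i => by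
      rw [← hf.2]
      ring_nf
    rw [Hm_succ_apply, H1_apply_of_eq_sub hr (f := fun i => f (i - m)) _ hshift ih]
    push_cast
    ring_nf

/-- `j` is 0-based, so the paper's `1 ≤ j ≤ m` reads `(j : ℕ) < m`. -/
theorem Hm_apply (r k : ℕ) (hr : 2 ≤ r)
    (μ : Fin r → ℤ) :
    (∀ m : ℕ, 1 ≤ m → ∀ hm : m ≤ r - 1, ∀ j : Fin r,
        (∀ hj : (j : ℕ) < m,
          Hm k m μ j =
            (k : ℤ) - μ ⟨r - m - 1, by omega⟩ +
              μ ⟨r - m + (j : ℕ), by have := j.isLt; omega⟩) ∧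
        (m ≤ (j : ℕ) →
          Hm k m μ j =
            μ ⟨(j : ℕ) - m, by have := j.isLt; omega⟩ - μ ⟨r - m - 1, by omega⟩)) ∧
      ∀ j : Fin r, Hm k r μ j = μ j - μ ⟨r - 1, by omega⟩ := by
  obtain ⟨f, hf⟩ := IsTwistedExtension.exists_of_pos (k := k) (by omega) μ
  refine ⟨fun m hm1 hm j => ⟨fun hj => ?_, fun hj => ?_⟩, fun j => ?_⟩ <;>
    rw [Hm_apply_eq_sub hr hf (by omega)]
  · rw [hf.apply_of_add_eq (j := ⟨r - m + j, by omega⟩) (by simp; omega),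
      hf.apply_of_eq (j := ⟨r - m - 1, by omega⟩) (by simp; omega)]
    ring
  · rw [hf.apply_of_eq (j := ⟨j - m, by omega⟩) (by simp; omega),
      hf.apply_of_eq (j := ⟨r - m - 1, by omega⟩) (by simp; omega)]
  · rw [hf.apply_of_add_eq (j := j) (by ring),
      hf.apply_of_add_eq (j := ⟨r - 1, by omega⟩) (by simp; omega)]
    ring

end VerlindePaper
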